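/- Let a₃, a₆ be integers and let w ∈ ℤ⟦z⟧ be the unique formal power series with zero constant term satisfying w = z³ + a₃w² + a₆w³, and let F ∈ ℤ⟦z⟧ be the unique power series with 3z²·F = dw/dz (formal derivative). Then the coefficient of z^{m} in F is 0 unless m = 3n−3 for some n ≥ 1, and [z^{3n−3}] F = Σ_{k=⌊(n−1)/2⌋}^{n−1} C(n+k−1, k)·C(k, n−k−1) · a₃^{2k−n+1} a₆^{n−1−k}. In other words, the invariant differential of E: y² + a₃y = x³ + a₆ has z-expansion ω_E = Σ_{n≥1} (Σ_{k=⌊(n−1)/2⌋}^{n−1} C(n+k−1,k)C(k,n−k−1) a₃^{2k−n+1} a₆^{n−k−1}) z^{3n−3} dz. -/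

import Mathlib

/-!
Since `w = z³ + O(z⁴)`, the fixed-point equation for `w` has a unique solution, namely
`w(z) = v(z³)` with `v` the compositional inverse of `ψ(t) = t - a₃t² - a₆t³`; hence
`F = v'(z³)` and `[z^(3n-3)] F = n [tⁿ] v`. By Lagrange inversion,
`[t^N] vʳ = [t^(N-r)] ψ'(t) (t / ψ(t))^(N+1)`: both sides satisfy the recurrence coming from
`v^(r+1) = t vʳ + a₃ v^(r+2) + a₆ v^(r+3)`, vanish for `r > N`, and agree for `r = 0` because
`N ψ' P^(N+1) = N Pᴺ - t (Pᴺ)'` for `P = t / ψ`. For `r = 1` this gives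
`n [tⁿ] v = [t^(n-1)] (1 - a₃t - a₆t²)^(-n)`, which the negative binomial series expands into
the stated sum.
-/

open PowerSeries Finset

variable {R : Type*} [CommRing R]

theorem coeff_C_add_C_mul_X_pow (a b : R) (d j : ℕ) :
    coeff j ((C a + C b * X) ^ d) = d.choose j * a ^ (d - j) * b ^ j := by
  have hterm (i : ℕ) : (C b * X) ^ i * C a ^ (d - i) * (d.choose i : R⟦X⟧) =
      C (d.choose i * a ^ (d - i) * b ^ i) * X ^ i := by
    simp only [map_mul, map_pow, map_natCast]; ring
  rw [add_comm, add_pow, map_sum]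
  simp only [hterm, coeff_C_mul_X_pow, sum_ite_eq, mem_range, ite_eq_left_iff, not_lt]
  intro hdj
  simp [Nat.choose_eq_zero_of_lt (Nat.lt_of_succ_le hdj)]

theorem coeff_X_mul_C_add_C_mul_X_pow (a b : R) (d m : ℕ) :
    coeff m ((X * (C a + C b * X)) ^ d) =
      if d ≤ m then (d.choose (m - d) * a ^ (2 * d - m) * b ^ (m - d) : R) else 0 := by
  rw [mul_pow, coeff_X_pow_mul', coeff_C_add_C_mul_X_pow]
  split_ifs
  · rw [show d - (m - d) = 2 * d - m by omega]
  · rfl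

theorem coeff_X_mul_derivative (f : R⟦X⟧) (m : ℕ) :
    coeff m (X * d⁄dX R f) = m * coeff m f := by
  rcases m with _ | m
  · simp
  · rw [coeff_succ_X_mul, coeff_derivative]
    push_cast
    ring

section invOneSubQuad

variable (a b : R)

/-- `(1 - a X - b X²)⁻¹`, as the geometric series in `a X + b X²`. -/
noncomputable def invOneSubQuad : R⟦X⟧ :=
  (mk 1 : R⟦X⟧).subst (X * (C a + C b * X))

theorem hasSubst_X_mul_C_add_C_mul_X : HasSubst (X * (C a + C b * X) : R⟦X⟧) :=
  HasSubst.of_constantCoeff_zero' (by simp)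

theorem invOneSubQuad_mul : invOneSubQuad a b * (1 - C a * X - C b * X ^ 2) = 1 := by
  have h := hasSubst_X_mul_C_add_C_mul_X a b
  have := congrArg (subst (X * (C a + C b * X) : R⟦X⟧)) (mk_one_mul_one_sub_eq_one R)
  rw [subst_mul h, subst_sub h, subst_X h, ← coe_substAlgHom h, map_one] at this
  rw [invOneSubQuad, ← coe_substAlgHom h]
  linear_combination this

theorem constantCoeff_invOneSubQuad : constantCoeff (invOneSubQuad a b) = 1 := by
  simpa using congrArg constantCoeff (invOneSubQuad_mul a b)

theorem coeff_invOneSubQuad_pow_succ (N m : ℕ) :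
    coeff m (invOneSubQuad a b ^ (N + 1)) =
      ∑ k ∈ Icc (m / 2) m,
        ((N + k).choose k * k.choose (m - k) : R) * a ^ (2 * k - m) * b ^ (m - k) := by
  rw [invOneSubQuad, ← subst_pow (hasSubst_X_mul_C_add_C_mul_X a b), mk_one_pow_eq_mk_choose_add,
    coeff_subst' (hasSubst_X_mul_C_add_C_mul_X a b),
    finsum_eq_sum_of_support_subset _ (s := Icc (m / 2) m)]
  · refine sum_congr rfl fun k hk => ?_
    rw [mem_Icc] at hk
    rw [coeff_mk, coeff_X_mul_C_add_C_mul_X_pow, if_pos hk.2, Nat.choose_symm_add, smul_eq_mul]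
    ring
  · intro k hk
    rw [Function.mem_support, coeff_X_mul_C_add_C_mul_X_pow] at hk
    simp only [coe_Icc, Set.mem_Icc]
    split_ifs at hk with hkm
    · refine ⟨?_, hkm⟩
      by_contra hlt
      rw [Nat.choose_eq_zero_of_lt (by omega)] at hk
      simp at hk
    · simp at hk

theorem derivative_invOneSubQuad :
    d⁄dX R (invOneSubQuad a b) = invOneSubQuad a b ^ 2 * (C a + 2 * C b * X) := by
  have h := invOneSubQuad_mul a b
  have h' := congrArg (d⁄dX R) h
  simp only [Derivation.leibniz, map_sub, Derivation.map_one_eq_zero, derivative_X, smul_eq_mul,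
    mul_one, derivative_C, mul_zero, add_zero, zero_sub, Derivation.leibniz_pow,
    Nat.add_one_sub_one, pow_one, nsmul_eq_mul, Nat.cast_ofNat] at h'
  linear_combination (-d⁄dX R (invOneSubQuad a b)) * h + invOneSubQuad a b * h'

theorem derivative_invOneSubQuad_pow (N : ℕ) :
    d⁄dX R (invOneSubQuad a b ^ N) =
      (N : R⟦X⟧) * invOneSubQuad a b ^ (N + 1) * (C a + 2 * C b * X) := by
  rcases N with _ | N
  · simp
  · rw [derivative_pow, derivative_invOneSubQuad]
    push_cast
    ring

/-- The integrand `ψ'(X) (X / ψ(X)) ^ (N + 1)` of the Lagrange inversion formula for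
`ψ = X - a X² - b X³`. -/
noncomputable def lagrangeKernel (N : ℕ) : R⟦X⟧ :=
  invOneSubQuad a b ^ (N + 1) * (1 - 2 * C a * X - 3 * C b * X ^ 2)

theorem lagrangeKernel_eq_mul (N : ℕ) :
    lagrangeKernel a b N = lagrangeKernel a b (N + 1) * (1 - C a * X - C b * X ^ 2) := by
  unfold lagrangeKernel
  linear_combination (-(invOneSubQuad a b ^ (N + 1) * (1 - 2 * C a * X - 3 * C b * X ^ 2))) *
    invOneSubQuad_mul a b

theorem natCast_mul_coeff_lagrangeKernel (N m : ℕ) :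
    N * coeff m (lagrangeKernel a b N) = (N - m) * coeff m (invOneSubQuad a b ^ N) := by
  have h : (N : R⟦X⟧) * lagrangeKernel a b N =
      (N : R⟦X⟧) * invOneSubQuad a b ^ N - X * d⁄dX R (invOneSubQuad a b ^ N) := by
    rw [derivative_invOneSubQuad_pow, lagrangeKernel]
    linear_combination ((N : R⟦X⟧) * invOneSubQuad a b ^ N) * invOneSubQuad_mul a b
  have := congrArg (coeff m) h
  rw [map_sub, coeff_X_mul_derivative, ← map_natCast (C (R := R)), coeff_C_mul,
    coeff_C_mul] at this
  linear_combination this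

theorem coeff_lagrangeKernel_self [IsAddTorsionFree R] (N : ℕ) :
    coeff N (lagrangeKernel a b N) = coeff N 1 := by
  rcases N with _ | N
  · simp [lagrangeKernel, constantCoeff_invOneSubQuad]
  · have h := natCast_mul_coeff_lagrangeKernel a b (N + 1) (N + 1)
    rw [sub_self, zero_mul, ← nsmul_eq_mul, smul_eq_zero] at h
    simpa using h

theorem coeff_succ_X_pow_succ_mul_lagrangeKernel (N r : ℕ) :
    coeff (N + 1) (X ^ (r + 1) * lagrangeKernel a b (N + 1)) =
      coeff N (X ^ r * lagrangeKernel a b N) +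
        a * coeff (N + 1) (X ^ (r + 2) * lagrangeKernel a b (N + 1)) +
          b * coeff (N + 1) (X ^ (r + 3) * lagrangeKernel a b (N + 1)) := by
  have h : X ^ (r + 1) * lagrangeKernel a b (N + 1) =
      X * (X ^ r * lagrangeKernel a b N) + C a * (X ^ (r + 2) * lagrangeKernel a b (N + 1)) +
        C b * (X ^ (r + 3) * lagrangeKernel a b (N + 1)) := by
    rw [lagrangeKernel_eq_mul a b N]
    ring
  rw [h, map_add, map_add, coeff_succ_X_mul, coeff_C_mul, coeff_C_mul]

end invOneSubQuad

theorem eq_of_recurrence {f g : ℕ → ℕ → R} (a b : R)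
    (hf : ∀ N r, f (N + 1) (r + 1) = f N r + a * f (N + 1) (r + 2) + b * f (N + 1) (r + 3))
    (hg : ∀ N r, g (N + 1) (r + 1) = g N r + a * g (N + 1) (r + 2) + b * g (N + 1) (r + 3))
    (hf_lt : ∀ N r, N < r → f N r = 0) (hg_lt : ∀ N r, N < r → g N r = 0)
    (h_zero : ∀ N, f N 0 = g N 0) : f = g := by
  -- for fixed `N + 1` the recurrence runs downwards in `r`, starting above `N + 1`
  suffices h : ∀ N k r, N < r + k → f N r = g N r from
    funext fun N => funext fun r => h N (N + 1) r (by omega)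
  intro N
  induction N with
  | zero =>
    rintro k (_ | r) _
    · exact h_zero 0
    · rw [hf_lt 0 (r + 1) (by omega), hg_lt 0 (r + 1) (by omega)]
  | succ N ihN =>
    intro k
    induction k with
    | zero => intro r hr; rw [hf_lt (N + 1) r (by omega), hg_lt (N + 1) r (by omega)]
    | succ k ihk =>
      rintro (_ | r) hr
      · exact h_zero (N + 1)
      · rw [hf, hg, ihN (N + 1) r (by omega), ihk (r + 2) (by omega), ihk (r + 3) (by omega)]

section Inversion

variable {a b : R} {v : R⟦X⟧}

theorem coeff_pow_of_lt (hv0 : constantCoeff v = 0) {N r : ℕ} (h : N < r) :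
    coeff N (v ^ r) = 0 :=
  X_pow_dvd_iff.mp (pow_dvd_pow_of_dvd (X_dvd_iff.mpr hv0) r) N h

theorem coeff_succ_pow_succ (hv : v = X + C a * v ^ 2 + C b * v ^ 3) (N r : ℕ) :
    coeff (N + 1) (v ^ (r + 1)) =
      coeff N (v ^ r) + a * coeff (N + 1) (v ^ (r + 2)) + b * coeff (N + 1) (v ^ (r + 3)) := by
  have h : v ^ (r + 1) = X * v ^ r + C a * v ^ (r + 2) + C b * v ^ (r + 3) := by
    linear_combination v ^ r * hv
  rw [h, map_add, map_add, coeff_succ_X_mul, coeff_C_mul, coeff_C_mul]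

theorem coeff_pow_eq_coeff_X_pow_mul_lagrangeKernel [IsAddTorsionFree R]
    (hv0 : constantCoeff v = 0) (hv : v = X + C a * v ^ 2 + C b * v ^ 3) (N r : ℕ) :
    coeff N (v ^ r) = coeff N (X ^ r * lagrangeKernel a b N) := by
  have key := eq_of_recurrence (f := fun N r => coeff N (v ^ r))
    (g := fun N r => coeff N (X ^ r * lagrangeKernel a b N)) a b (coeff_succ_pow_succ hv)
    (coeff_succ_X_pow_succ_mul_lagrangeKernel a b) (fun _ _ => coeff_pow_of_lt hv0)
    (fun N r h => by simp [coeff_X_pow_mul', h.not_ge])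
    (fun N => by simp [coeff_lagrangeKernel_self])
  exact congrFun (congrFun key N) r

theorem natCast_mul_coeff_eq_coeff_invOneSubQuad_pow [IsAddTorsionFree R]
    (hv0 : constantCoeff v = 0) (hv : v = X + C a * v ^ 2 + C b * v ^ 3) (N : ℕ) :
    (N + 1) * coeff (N + 1) v = coeff N (invOneSubQuad a b ^ (N + 1)) := by
  have h := coeff_pow_eq_coeff_X_pow_mul_lagrangeKernel hv0 hv (N + 1) 1
  rw [pow_one, pow_one, coeff_succ_X_mul] at h
  rw [h]
  have := natCast_mul_coeff_lagrangeKernel a b (N + 1) N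
  push_cast at this
  linear_combination this

end Inversion

theorem eq_of_eq_add_C_mul_sq_add_C_mul_pow_three {f g p : R⟦X⟧} {a b : R}
    (hf0 : constantCoeff f = 0) (hg0 : constantCoeff g = 0)
    (hf : f = p + C a * f ^ 2 + C b * f ^ 3) (hg : g = p + C a * g ^ 2 + C b * g ^ 3) : f = g := by
  set h := C a * (f + g) + C b * (f ^ 2 + f * g + g ^ 2)
  have hfg : (f - g) * (1 - h) = 0 := by linear_combination hf - hg
  have hu : IsUnit (1 - h) := isUnit_iff_constantCoeff.mpr (by simp [h, hf0, hg0])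
  exact sub_eq_zero.mp ((hu.mul_left_eq_zero).mp hfg)

theorem exists_eq_X_add_C_mul_sq_add_C_mul_pow_three (a b : R) :
    ∃ v : R⟦X⟧, constantCoeff v = 0 ∧ v = X + C a * v ^ 2 + C b * v ^ 3 := by
  set ψ : R⟦X⟧ := X - a • X ^ 2 - b • X ^ 3
  have hψ0 : constantCoeff ψ = 0 := by simp [ψ]
  have hψ1 : IsUnit (coeff 1 ψ) := by simp [ψ, coeff_X_pow]
  have hv := HasSubst.substInvOfIsUnit ψ hψ1
  refine ⟨ψ.substInvOfIsUnit hψ1, constantCoeff_substInvOfIsUnit ψ hψ1, ?_⟩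
  have h := subst_substInvOfIsUnit_right ψ hψ0 hψ1
  rw [← coe_substAlgHom hv, map_sub, map_sub, map_smul, map_smul, map_pow, map_pow, substAlgHom_X,
    smul_eq_C_mul, smul_eq_C_mul] at h
  linear_combination h

theorem subst_X_pow_eq_X_pow_add {a b : R} {v : R⟦X⟧} (hv : v = X + C a * v ^ 2 + C b * v ^ 3)
    {k : ℕ} (hk : k ≠ 0) :
    v.subst (X ^ k : R⟦X⟧) =
      X ^ k + C a * v.subst (X ^ k : R⟦X⟧) ^ 2 + C b * v.subst (X ^ k : R⟦X⟧) ^ 3 := by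
  have h := HasSubst.X_pow (R := R) hk
  conv_lhs => rw [hv]
  rw [subst_add h, subst_add h, subst_mul h, subst_mul h, subst_pow h, subst_pow h, subst_X h,
    subst_C, subst_C]
  rfl

theorem eq_subst_X_pow_derivative [IsDomain R] [CharZero R] {v F : R⟦X⟧} {k : ℕ}
    (hk : k ≠ 0)
    (hF : (k : R⟦X⟧) * X ^ (k - 1) * F = d⁄dX R (v.subst (X ^ k : R⟦X⟧))) :
    F = (d⁄dX R v).subst (X ^ k : R⟦X⟧) := by
  have hk' : (k : R⟦X⟧) * X ^ (k - 1) ≠ 0 := by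
    refine mul_ne_zero (fun h => ?_) (pow_ne_zero _ X_ne_zero)
    simpa [hk] using congrArg constantCoeff h
  refine mul_left_cancel₀ hk' ?_
  rw [hF, derivative_subst (HasSubst.X_pow hk), derivative_pow, derivative_X, mul_one, mul_comm]

theorem stmt17 (a₃ a₆ : ℤ) (w F : PowerSeries ℤ)
    (hw0 : PowerSeries.constantCoeff w = 0)
    (hw : w = X ^ 3 + C a₃ * w ^ 2 + C a₆ * w ^ 3)
    (hF : 3 * X ^ 2 * F = PowerSeries.derivative ℤ w) :
    (∀ m : ℕ, (∀ n : ℕ, 1 ≤ n → m ≠ 3 * n - 3) → PowerSeries.coeff m F = 0) ∧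
    (∀ n : ℕ, 1 ≤ n →
      PowerSeries.coeff (3 * n - 3) F =
        ∑ k ∈ Finset.Icc ((n - 1) / 2) (n - 1),
          ((n + k - 1).choose k * k.choose (n - k - 1) : ℤ) *
            a₃ ^ (2 * k + 1 - n) * a₆ ^ (n - 1 - k)) := by
  obtain ⟨v, hv0, hv⟩ := exists_eq_X_add_C_mul_sq_add_C_mul_pow_three a₃ a₆
  have hwv : w = v.subst (X ^ 3 : ℤ⟦X⟧) :=
    eq_of_eq_add_C_mul_sq_add_C_mul_pow_three hw0
      (by rw [constantCoeff_subst_X_pow three_ne_zero, hv0]; rfl) hw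
      (subst_X_pow_eq_X_pow_add hv three_ne_zero)
  have hFv : F = (d⁄dX ℤ v).subst (X ^ 3 : ℤ⟦X⟧) :=
    eq_subst_X_pow_derivative three_ne_zero (by rw [← hwv]; exact_mod_cast hF)
  refine ⟨fun m hm => ?_, fun n hn => ?_⟩
  · rw [hFv, coeff_subst_X_pow three_ne_zero, if_neg]
    rintro ⟨q, rfl⟩
    exact hm (q + 1) (by omega) (by omega)
  · obtain ⟨N, rfl⟩ : ∃ N, n = N + 1 := ⟨n - 1, by omega⟩
    rw [hFv, coeff_subst_X_pow three_ne_zero, if_pos ⟨N, by omega⟩,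
      show (3 * (N + 1) - 3) / 3 = N by omega, coeff_derivative, Algebra.algebraMap_self,
      RingHom.id_apply, mul_comm, natCast_mul_coeff_eq_coeff_invOneSubQuad_pow hv0 hv,
      coeff_invOneSubQuad_pow_succ, Nat.add_sub_cancel]
    refine sum_congr rfl fun k _ => ?_
    rw [show N + 1 + k - 1 = N + k by omega, show N + 1 - k - 1 = N - k by omega,
      show 2 * k + 1 - (N + 1) = 2 * k - N by omega]
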